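/- arXiv:2603.22900 — 3 statements merged into one kernel-verified Lean document; each statement's English description precedes it below -/
import Mathlib

section
/- Under conditionally independent censoring with G(t|x,a) > 0, if the outcome model is correct, i.e., Ŝ(x,a,t) = S(x,a,t) for all (x,a), then the IPCW-DR estimator is unbiased for V(π_e,t) regardless of the weights w(x,a) used: E[w(x,a)(I{min(L,C)>t}/G(t|x,a) − S(x,a,t)) + Σ_{a'} π_e(a'|x) S(x,a',t)] = V(π_e,t), where the expectation is over (x,a,L,C) ~ p(x)π_0(a|x)p(L,C|x,a). -/
/-!
Under conditionally independent censoring, `P(min(L, C) > t | x, a) = S(x, a, t) G(t | x, a)`,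
so the inverse-probability-of-censoring weighted indicator has conditional mean `S(x, a, t)`.
When the outcome model is `S` itself, the weighted correction term is therefore centred for
every `(x, a)`, whatever the weight `w(x, a)`, and only the direct-method term
`∑ a', πe(a' | x) S(x, a', t)` survives; it does not depend on `a`, so averaging over `π0`
leaves it unchanged.
-/

open MeasureTheory Finset

section

variable {Ω : Type*} [MeasurableSpace Ω]

theorem integral_mul_sub_integral_add_const (μ : Measure Ω) [IsProbabilityMeasure μ]
    {f : Ω → ℝ} (hf : Integrable f μ) {m : ℝ} (hm : ∫ ω, f ω ∂μ = m) (w c : ℝ) :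
    ∫ ω, (w * (f ω - m) + c) ∂μ = c := by
  have hcentred : Integrable (fun ω => w * (f ω - m)) μ :=
    (hf.sub (integrable_const m)).const_mul w
  rw [integral_add hcentred (integrable_const c), integral_const_mul,
    integral_sub hf (integrable_const m), hm]
  simp

theorem measurableSet_lt_min {L C : Ω → ℝ} (hL : Measurable L) (hC : Measurable C) (t : ℝ) :
    MeasurableSet {ω | t < min (L ω) (C ω)} :=
  measurableSet_lt measurable_const (hL.min hC)

theorem integral_indicator_lt_min_div_survival (μ : Measure Ω) {L C : Ω → ℝ}
    (hL : Measurable L) (hC : Measurable C) (t : ℝ)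
    (hInd : μ {ω | t < L ω ∧ t < C ω} = μ {ω | t < L ω} * μ {ω | t < C ω})
    (hG : (μ {ω | t < C ω}).toReal ≠ 0) :
    ∫ ω, {ω | t < min (L ω) (C ω)}.indicator (fun _ => (1 : ℝ)) ω / (μ {ω | t < C ω}).toReal ∂μ
      = (μ {ω | t < L ω}).toReal := by
  rw [integral_div, integral_indicator_const _ (measurableSet_lt_min hL hC t), smul_eq_mul,
    mul_one, measureReal_def]
  simp_rw [lt_min_iff]
  rw [hInd, ENNReal.toReal_mul, mul_div_cancel_right₀ _ hG]

end

theorem ipcw_dr_unbiased_outcome_general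
    {X A Ω : Type*} [Fintype X] [Fintype A] [MeasurableSpace Ω]
    (p : X → ℝ)
    (π0 πe : X → A → ℝ)
    (hπ0s : ∀ x, ∑ a, π0 x a = 1)
    (μ : X → A → Measure Ω) [∀ x a, IsProbabilityMeasure (μ x a)]
    (L C : Ω → ℝ) (hL : Measurable L) (hC : Measurable C)
    (hInd : ∀ x a (s u : ℝ), μ x a {ω | s < L ω ∧ u < C ω} =
      μ x a {ω | s < L ω} * μ x a {ω | u < C ω})
    (t : ℝ)
    (hG : ∀ x a, 0 < (μ x a {ω | t < C ω}).toReal)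
    (w : X → A → ℝ) :
    ∑ x, p x * ∑ a, π0 x a *
        ∫ ω, (w x a *
            (Set.indicator {ω : Ω | t < min (L ω) (C ω)} (fun _ => (1 : ℝ)) ω
              / (μ x a {ω | t < C ω}).toReal - (μ x a {ω | t < L ω}).toReal)
          + ∑ a', πe x a' * (μ x a' {ω | t < L ω}).toReal) ∂(μ x a)
      = ∑ x, p x * ∑ a, πe x a * (μ x a {ω | t < L ω}).toReal := by
  refine sum_congr rfl fun x _ => congrArg (p x * ·) ?_
  calc _ = ∑ a, π0 x a * ∑ a', πe x a' * (μ x a' {ω | t < L ω}).toReal :=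
        sum_congr rfl fun a _ => congrArg (π0 x a * ·) <|
          integral_mul_sub_integral_add_const (μ x a)
            (((integrable_const 1).indicator (measurableSet_lt_min hL hC t)).div_const _)
            (integral_indicator_lt_min_div_survival (μ x a) hL hC t (hInd x a t t)
              (hG x a).ne') _ _
    _ = _ := by rw [← sum_mul, hπ0s, one_mul]

/-- Unbiasedness of the IPCW-DR estimator when the outcome model is correct
(`Ŝ = S`), for an arbitrary weight function `w`. -/
theorem ipcw_dr_unbiased_outcome
    {X A Ω : Type*} [Fintype X] [Fintype A] [MeasurableSpace Ω]
    (p : X → ℝ) (hp : ∀ x, 0 ≤ p x) (hp1 : ∑ x, p x = 1)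
    (π0 πe : X → A → ℝ)
    (hπ0 : ∀ x a, 0 ≤ π0 x a) (hπ0s : ∀ x, ∑ a, π0 x a = 1)
    (hπe : ∀ x a, 0 ≤ πe x a) (hπes : ∀ x, ∑ a, πe x a = 1)
    (μ : X → A → Measure Ω) [∀ x a, IsProbabilityMeasure (μ x a)]
    (L C : Ω → ℝ) (hL : Measurable L) (hC : Measurable C)
    (hInd : ∀ x a (s u : ℝ), μ x a {ω | s < L ω ∧ u < C ω} =
      μ x a {ω | s < L ω} * μ x a {ω | u < C ω})
    (t : ℝ)
    (hG : ∀ x a, 0 < (μ x a {ω | t < C ω}).toReal)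
    (w : X → A → ℝ) :
    ∑ x, p x * ∑ a, π0 x a *
        ∫ ω, (w x a *
            (Set.indicator {ω : Ω | t < min (L ω) (C ω)} (fun _ => (1 : ℝ)) ω
              / (μ x a {ω | t < C ω}).toReal - (μ x a {ω | t < L ω}).toReal)
          + ∑ a', πe x a' * (μ x a' {ω | t < L ω}).toReal) ∂(μ x a)
      = ∑ x, p x * ∑ a, πe x a * (μ x a {ω | t < L ω}).toReal :=
  ipcw_dr_unbiased_outcome_general p π0 πe hπ0s μ L C hL hC hInd t hG w
end

section
/- Under common support, conditionally independent censoring, and correct specification of the outcome model (Ŝ = S) and censoring model, the scaled variance of the single-sample IPCW-DR term equals E_{p(x)π_0(a|x)}[w(x,a)² σ²(x,a,t)] + Var_{p(x)}[S^{π_e}(x,t)], where w(x,a)=π_e(a|x)/π_0(a|x), σ²(x,a,t)=S(x,a,t)/G(t|x,a) − S(x,a,t)², and S^{π_e}(x,t)=Σ_a π_e(a|x)S(x,a,t). -/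
open MeasureTheory Finset

/-!
Given `(x, a)`, the term is an affine function of the Bernoulli variable `1{min(L, C) > t}`,
whose success probability is `S·G` by conditional independence of `L` and `C`. Hence its
conditional mean is `S^{πe}(x, t)` and its conditional variance is
`w² (S/G − S²)`. The law of total variance over the finite mixture `p(x) π₀(a|x)` then splits
the total variance into these conditional variances plus the variance of `S^{πe}(·, t)`.
-/

theorem integral_comp_indicator_one {Ω : Type*} [MeasurableSpace Ω] (μ : Measure Ω)
    [IsFiniteMeasure μ] {s : Set Ω} (hs : MeasurableSet s) (f : ℝ → ℝ) :
    ∫ ω, f (s.indicator (fun _ => 1) ω) ∂μ = μ.real s * f 1 + μ.real sᶜ * f 0 := by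
  classical
  have hpiece : (fun ω => f (s.indicator (fun _ => 1) ω))
      = s.piecewise (fun _ => f 1) (fun _ => f 0) := by
    funext ω
    by_cases h : ω ∈ s <;> simp [h]
  rw [hpiece, integral_piecewise hs integrableOn_const integrableOn_const,
    setIntegral_const, setIntegral_const, smul_eq_mul, smul_eq_mul]

theorem measureReal_lt_min_eq_mul {Ω : Type*} [MeasurableSpace Ω] (μ : Measure Ω)
    (L C : Ω → ℝ) (t : ℝ)
    (hInd : μ {ω | t < L ω ∧ t < C ω} = μ {ω | t < L ω} * μ {ω | t < C ω}) :
    μ.real {ω | t < min (L ω) (C ω)} = μ.real {ω | t < L ω} * μ.real {ω | t < C ω} := by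
  simp only [lt_min_iff, measureReal_def, hInd, ENNReal.toReal_mul]

section IPCW

variable {Ω : Type*} [MeasurableSpace Ω] (μ : Measure Ω) [IsProbabilityMeasure μ]
  {s : Set Ω} {S G : ℝ}

theorem integral_ipcw_term (hs : MeasurableSet s) (hsG : μ.real s = S * G) (hG : G ≠ 0)
    (w m : ℝ) : ∫ ω, (w * (s.indicator (fun _ => (1 : ℝ)) ω / G - S) + m) ∂μ = m := by
  rw [integral_comp_indicator_one μ hs (fun y => w * (y / G - S) + m),
    probReal_compl_eq_one_sub hs, hsG]
  field_simp
  ring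

theorem integral_ipcw_term_sq (hs : MeasurableSet s) (hsG : μ.real s = S * G) (hG : G ≠ 0)
    (w m : ℝ) :
    ∫ ω, (w * (s.indicator (fun _ => (1 : ℝ)) ω / G - S) + m) ^ 2 ∂μ
      = w ^ 2 * (S / G - S ^ 2) + m ^ 2 := by
  rw [integral_comp_indicator_one μ hs (fun y => (w * (y / G - S) + m) ^ 2),
    probReal_compl_eq_one_sub hs, hsG]
  field_simp
  ring

end IPCW

theorem mixture_variance_eq {X A : Type*} [Fintype X] [Fintype A] (p : X → ℝ)
    (π : X → A → ℝ) (hπ : ∀ x, ∑ a, π x a = 1) (m : X → ℝ) (v E₁ E₂ : X → A → ℝ)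
    (hE₁ : ∀ x a, E₁ x a = m x) (hE₂ : ∀ x a, E₂ x a = v x a + m x ^ 2) :
    (∑ x, p x * ∑ a, π x a * E₂ x a) - (∑ x, p x * ∑ a, π x a * E₁ x a) ^ 2
      = (∑ x, p x * ∑ a, π x a * v x a)
        + ((∑ x, p x * m x ^ 2) - (∑ x, p x * m x) ^ 2) := by
  have hmean : ∀ x, ∑ a, π x a * E₁ x a = m x := fun x => by
    simp only [hE₁, ← Finset.sum_mul, hπ, one_mul]
  have hsecond : ∀ x, ∑ a, π x a * E₂ x a = ∑ a, π x a * v x a + m x ^ 2 := fun x => by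
    simp only [hE₂, mul_add, Finset.sum_add_distrib, ← Finset.sum_mul, hπ, one_mul]
  simp only [hmean, hsecond, mul_add, Finset.sum_add_distrib]
  ring

theorem ipcw_dr_variance_general
    {X A Ω : Type*} [Fintype X] [Fintype A] [MeasurableSpace Ω]
    (p : X → ℝ)
    (π0 πe : X → A → ℝ)
    (hπ0s : ∀ x, ∑ a, π0 x a = 1)
    (μ : X → A → Measure Ω) [∀ x a, IsProbabilityMeasure (μ x a)]
    (L C : Ω → ℝ) (hL : Measurable L) (hC : Measurable C)
    (hInd : ∀ x a (s u : ℝ), μ x a {ω | s < L ω ∧ u < C ω} =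
      μ x a {ω | s < L ω} * μ x a {ω | u < C ω})
    (t : ℝ)
    (S G : X → A → ℝ)
    (hS : ∀ x a, S x a = (μ x a {ω | t < L ω}).toReal)
    (hGdef : ∀ x a, G x a = (μ x a {ω | t < C ω}).toReal)
    (hG : ∀ x a, 0 < G x a)
    (w : X → A → ℝ) :
    (∑ x, p x * ∑ a, π0 x a *
        ∫ ω, (w x a *
            (Set.indicator {ω : Ω | t < min (L ω) (C ω)} (fun _ => (1 : ℝ)) ω / G x a - S x a)
          + ∑ a', πe x a' * S x a') ^ 2 ∂(μ x a))
      - (∑ x, p x * ∑ a, π0 x a *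
          ∫ ω, (w x a *
              (Set.indicator {ω : Ω | t < min (L ω) (C ω)} (fun _ => (1 : ℝ)) ω / G x a - S x a)
            + ∑ a', πe x a' * S x a') ∂(μ x a)) ^ 2
    = (∑ x, p x * ∑ a, π0 x a * (w x a ^ 2 * (S x a / G x a - S x a ^ 2)))
      + ((∑ x, p x * (∑ a, πe x a * S x a) ^ 2) - (∑ x, p x * ∑ a, πe x a * S x a) ^ 2) := by
  have hs : MeasurableSet {ω : Ω | t < min (L ω) (C ω)} :=
    measurableSet_lt measurable_const (hL.min hC)
  have hsurvival : ∀ x a, (μ x a).real {ω | t < min (L ω) (C ω)} = S x a * G x a :=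
    fun x a => by
      rw [measureReal_lt_min_eq_mul (μ x a) L C t (hInd x a t t), hS, hGdef, measureReal_def,
        measureReal_def]
  exact mixture_variance_eq p π0 hπ0s (fun x => ∑ a', πe x a' * S x a') _ _ _
    (fun x a => integral_ipcw_term (μ x a) hs (hsurvival x a) (hG x a).ne' _ _)
    (fun x a => integral_ipcw_term_sq (μ x a) hs (hsurvival x a) (hG x a).ne' _ _)

/-- Variance of the single-sample IPCW-DR term with correctly specified
outcome and censoring models. -/
theorem ipcw_dr_variance
    {X A Ω : Type*} [Fintype X] [Fintype A] [MeasurableSpace Ω]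
    (p : X → ℝ) (hp : ∀ x, 0 ≤ p x) (hp1 : ∑ x, p x = 1)
    (π0 πe : X → A → ℝ)
    (hπ0 : ∀ x a, 0 ≤ π0 x a) (hπ0s : ∀ x, ∑ a, π0 x a = 1)
    (hπe : ∀ x a, 0 ≤ πe x a) (hπes : ∀ x, ∑ a, πe x a = 1)
    (hsupp : ∀ x a, 0 < πe x a → 0 < π0 x a)
    (μ : X → A → Measure Ω) [∀ x a, IsProbabilityMeasure (μ x a)]
    (L C : Ω → ℝ) (hL : Measurable L) (hC : Measurable C)
    (hInd : ∀ x a (s u : ℝ), μ x a {ω | s < L ω ∧ u < C ω} =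
      μ x a {ω | s < L ω} * μ x a {ω | u < C ω})
    (t : ℝ)
    (S G : X → A → ℝ)
    (hS : ∀ x a, S x a = (μ x a {ω | t < L ω}).toReal)
    (hGdef : ∀ x a, G x a = (μ x a {ω | t < C ω}).toReal)
    (hG : ∀ x a, 0 < G x a)
    (w : X → A → ℝ) (hw : ∀ x a, w x a = πe x a / π0 x a) :
    (∑ x, p x * ∑ a, π0 x a *
        ∫ ω, (w x a *
            (Set.indicator {ω : Ω | t < min (L ω) (C ω)} (fun _ => (1 : ℝ)) ω / G x a - S x a)
          + ∑ a', πe x a' * S x a') ^ 2 ∂(μ x a))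
      - (∑ x, p x * ∑ a, π0 x a *
          ∫ ω, (w x a *
              (Set.indicator {ω : Ω | t < min (L ω) (C ω)} (fun _ => (1 : ℝ)) ω / G x a - S x a)
            + ∑ a', πe x a' * S x a') ∂(μ x a)) ^ 2
    = (∑ x, p x * ∑ a, π0 x a * (w x a ^ 2 * (S x a / G x a - S x a ^ 2)))
      + ((∑ x, p x * (∑ a, πe x a * S x a) ^ 2) - (∑ x, p x * ∑ a, πe x a * S x a) ^ 2) :=
  ipcw_dr_variance_general p π0 πe hπ0s μ L C hL hC hInd t S G hS hGdef hG w
end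

section
/- Under common support, conditionally independent censoring, correctly specified G > 0 and π_0, the IPCW-IPS estimator of the Lagrangian policy gradient is unbiased: E_{p(x)π_0(a|x)p(L,C|x,a)}[(π_θ(a|x)/π_0(a|x))·(I{min(L,C)>t}/G(t|x,a) − λ c(x,a))·∇_θ log π_θ(a|x)] = ∇_θ L(π_θ, t, λ), where ∇_θ L(π_θ,t,λ) = E_{p(x)π_θ(a|x)}[(S(x,a,t) − λ c(x,a)) ∇_θ log π_θ(a|x)]. -/
/-!
Fix a context `x` and an action `a`. Since `L` and `C` are independent, the observed event
`{t < min L C}` has probability `S(t) G(t)`, so dividing its indicator by `G(t) > 0` gives an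
unbiased estimate of `S(t)` (inverse probability of censoring weighting). The importance weight
`π_θ / π_0` then turns the `π_0`-average over actions into the `π_θ`-average, which is legitimate
because `π_0 > 0` wherever `π_θ > 0`.
-/

open MeasureTheory Finset

section IPCW

variable {Ω : Type*} [MeasurableSpace Ω] {μ : Measure Ω} {L C : Ω → ℝ} {t : ℝ}

theorem measureReal_setOf_lt_min_of_indep
    (hInd : μ {ω | t < L ω ∧ t < C ω} = μ {ω | t < L ω} * μ {ω | t < C ω}) :
    μ.real {ω | t < min (L ω) (C ω)} = μ.real {ω | t < L ω} * μ.real {ω | t < C ω} := by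
  simp only [measureReal_def, lt_min_iff, hInd, ENNReal.toReal_mul]

theorem integral_ipcw_indicator (hL : Measurable L) (hC : Measurable C)
    (hInd : μ {ω | t < L ω ∧ t < C ω} = μ {ω | t < L ω} * μ {ω | t < C ω})
    (hG : μ.real {ω | t < C ω} ≠ 0) :
    ∫ ω, {ω | t < min (L ω) (C ω)}.indicator (fun _ => (1 : ℝ)) ω / μ.real {ω | t < C ω} ∂μ
      = μ.real {ω | t < L ω} := by
  rw [integral_div, integral_indicator_const _ (measurableSet_lt measurable_const (hL.min hC)),
    smul_eq_mul, mul_one, measureReal_setOf_lt_min_of_indep hInd, mul_div_cancel_right₀ _ hG]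

theorem integral_weighted_ipcw_lagrangian [IsProbabilityMeasure μ] (hL : Measurable L)
    (hC : Measurable C)
    (hInd : μ {ω | t < L ω ∧ t < C ω} = μ {ω | t < L ω} * μ {ω | t < C ω})
    (hG : μ.real {ω | t < C ω} ≠ 0) (w r g : ℝ) :
    ∫ ω, w * ({ω | t < min (L ω) (C ω)}.indicator (fun _ => (1 : ℝ)) ω
        / μ.real {ω | t < C ω} - r) * g ∂μ
      = w * ((μ.real {ω | t < L ω} - r) * g) := by
  have hint : Integrable (fun ω => {ω | t < min (L ω) (C ω)}.indicator (fun _ => (1 : ℝ)) ω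
      / μ.real {ω | t < C ω}) μ :=
    ((integrable_const 1).indicator (measurableSet_lt measurable_const (hL.min hC))).div_const _
  rw [integral_mul_const, integral_const_mul, integral_sub hint (integrable_const r),
    integral_ipcw_indicator hL hC hInd hG, integral_const, probReal_univ, one_smul, mul_assoc]

end IPCW

theorem ipcw_ips_lagrangian_gradient_unbiased_general
    {X A Ω : Type*} [Fintype X] [Fintype A] [MeasurableSpace Ω] {d : ℕ}
    (p : X → ℝ)
    (π0 : X → A → ℝ)
    (π : (Fin d → ℝ) → X → A → ℝ)
    (hpos : ∀ θ x a, 0 < π θ x a)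
    (θ0 : Fin d → ℝ)
    (hsupp : ∀ x a, 0 < π θ0 x a → 0 < π0 x a)
    (μ : X → A → Measure Ω) [∀ x a, IsProbabilityMeasure (μ x a)]
    (L C : Ω → ℝ) (hL : Measurable L) (hC : Measurable C)
    (hInd : ∀ x a (s u : ℝ), μ x a {ω | s < L ω ∧ u < C ω} =
      μ x a {ω | s < L ω} * μ x a {ω | u < C ω})
    (t : ℝ)
    (hG : ∀ x a, 0 < (μ x a {ω | t < C ω}).toReal)
    (c : X → A → ℝ) (lam : ℝ)
    (v : Fin d → ℝ) :
    ∑ x, p x * ∑ a, π0 x a *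
        ∫ ω, (π θ0 x a / π0 x a) *
          (Set.indicator {ω : Ω | t < min (L ω) (C ω)} (fun _ => (1 : ℝ)) ω
              / (μ x a {ω | t < C ω}).toReal - lam * c x a) *
          (fderiv ℝ (fun θ => Real.log (π θ x a)) θ0 v) ∂(μ x a)
      = ∑ x, p x * ∑ a, π θ0 x a *
          (((μ x a {ω | t < L ω}).toReal - lam * c x a) *
            (fderiv ℝ (fun θ => Real.log (π θ x a)) θ0 v)) := by
  refine sum_congr rfl fun x _ => congrArg (p x * ·) (sum_congr rfl fun a _ => ?_)
  have hπ0 : π0 x a ≠ 0 := (hsupp x a (hpos θ0 x a)).ne'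
  simp only [← measureReal_def] at hG ⊢
  rw [integral_weighted_ipcw_lagrangian hL hC (hInd x a t t) (hG x a).ne', ← mul_assoc,
    mul_div_cancel₀ _ hπ0]

/-- Unbiasedness of the IPCW-IPS estimator of the Lagrangian policy gradient. -/
theorem ipcw_ips_lagrangian_gradient_unbiased
    {X A Ω : Type*} [Fintype X] [Fintype A] [MeasurableSpace Ω] {d : ℕ}
    (p : X → ℝ) (hp : ∀ x, 0 ≤ p x) (hp1 : ∑ x, p x = 1)
    (π0 : X → A → ℝ)
    (hπ0 : ∀ x a, 0 ≤ π0 x a) (hπ0s : ∀ x, ∑ a, π0 x a = 1)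
    (π : (Fin d → ℝ) → X → A → ℝ)
    (hpos : ∀ θ x a, 0 < π θ x a)
    (hsum : ∀ θ x, ∑ a, π θ x a = 1)
    (θ0 : Fin d → ℝ)
    (hdiff : ∀ x a, DifferentiableAt ℝ (fun θ => π θ x a) θ0)
    (hsupp : ∀ x a, 0 < π θ0 x a → 0 < π0 x a)
    (μ : X → A → Measure Ω) [∀ x a, IsProbabilityMeasure (μ x a)]
    (L C : Ω → ℝ) (hL : Measurable L) (hC : Measurable C)
    (hInd : ∀ x a (s u : ℝ), μ x a {ω | s < L ω ∧ u < C ω} =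
      μ x a {ω | s < L ω} * μ x a {ω | u < C ω})
    (t : ℝ)
    (hG : ∀ x a, 0 < (μ x a {ω | t < C ω}).toReal)
    (c : X → A → ℝ) (lam : ℝ) (hlam : 0 ≤ lam)
    (v : Fin d → ℝ) :
    ∑ x, p x * ∑ a, π0 x a *
        ∫ ω, (π θ0 x a / π0 x a) *
          (Set.indicator {ω : Ω | t < min (L ω) (C ω)} (fun _ => (1 : ℝ)) ω
              / (μ x a {ω | t < C ω}).toReal - lam * c x a) *
          (fderiv ℝ (fun θ => Real.log (π θ x a)) θ0 v) ∂(μ x a)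
      = ∑ x, p x * ∑ a, π θ0 x a *
          (((μ x a {ω | t < L ω}).toReal - lam * c x a) *
            (fderiv ℝ (fun θ => Real.log (π θ x a)) θ0 v)) :=
  ipcw_ips_lagrangian_gradient_unbiased_general p π0 π hpos θ0 hsupp μ L C hL hC hInd t hG c lam v
end
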